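/- (Theorem 1, part 1, achievability direction.) Let K ∈ ℝ^{(T+1)p×(T+1)n} be block lower triangular, and define Φ_x := (I − Z(Â + B̂K))^{-1} ∈ ℝ^{(T+1)n×(T+1)n} and Φ_u := K·Φ_x ∈ ℝ^{(T+1)p×(T+1)n} (the inverse exists since Z(Â + B̂K) is nilpotent). Then Φ_x and Φ_u are block lower triangular and satisfy the affine constraint (I − ZÂ)Φ_x − ZB̂Φ_u = I. -/

import Mathlib

/-- Block lower triangular: the `((t,i),(s,j))` entry vanishes whenever `s > t`. -/
def BlockLT {a b T : ℕ}
    (M : Matrix (Fin (T + 1) × Fin a) (Fin (T + 1) × Fin b) ℝ) : Prop :=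
  ∀ (t s : Fin (T + 1)) (i : Fin a) (j : Fin b), t < s → M (t, i) (s, j) = 0

/-- Strictly block lower triangular: the `((t,i),(s,j))` entry vanishes whenever `s ≥ t`. -/
def StrictBlockLT {a b T : ℕ}
    (M : Matrix (Fin (T + 1) × Fin a) (Fin (T + 1) × Fin b) ℝ) : Prop :=
  ∀ (t s : Fin (T + 1)) (i : Fin a) (j : Fin b), t ≤ s → M (t, i) (s, j) = 0

/-- The block-downshift matrix `Z`: the `((t,i),(s,j))` entry is `1` iff `t = s + 1` and `i = j`. -/
def shiftZ (n T : ℕ) : Matrix (Fin (T + 1) × Fin n) (Fin (T + 1) × Fin n) ℝ :=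
  fun r c => if (r.1 : ℕ) = (c.1 : ℕ) + 1 ∧ r.2 = c.2 then 1 else 0

/-- `Â = blkdiag(A, …, A)`. -/
def hatA {n : ℕ} (T : ℕ) (A : Matrix (Fin n) (Fin n) ℝ) :
    Matrix (Fin (T + 1) × Fin n) (Fin (T + 1) × Fin n) ℝ :=
  fun r c => if r.1 = c.1 then A r.2 c.2 else 0

/-- `B̂ = blkdiag(B, …, B, 0)`. -/
def hatB {n p : ℕ} (T : ℕ) (B : Matrix (Fin n) (Fin p) ℝ) :
    Matrix (Fin (T + 1) × Fin n) (Fin (T + 1) × Fin p) ℝ :=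
  fun r c => if r.1 = c.1 ∧ (c.1 : ℕ) < T then B r.2 c.2 else 0

/-!
The closed-loop matrix `N = Z(Â + B̂K)` is strictly block lower triangular, because `Z` lowers the
time index by one and `Â + B̂K` does not raise it; hence `N ^ (T + 1) = 0` and `I - N` is invertible.
Inverses of block lower triangular matrices are block lower triangular, which gives both `Φ_x` and
`Φ_u = KΦ_x`. Expanding `N`, the affine constraint is just `(I - N) Φ_x = I`.
-/

open Matrix OrderDual

section BlockLowerTriangular

variable {a b c T : ℕ}

theorem blockLT_iff_blockTriangular {M : Matrix (Fin (T + 1) × Fin a) (Fin (T + 1) × Fin a) ℝ} :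
    BlockLT M ↔ M.BlockTriangular (toDual ∘ Prod.fst) :=
  ⟨fun hM ⟨t, i⟩ ⟨s, j⟩ h => hM t s i j h, fun hM t s i j h => hM (i := (t, i)) (j := (s, j)) h⟩

theorem BlockLT.mul {M : Matrix (Fin (T + 1) × Fin a) (Fin (T + 1) × Fin b) ℝ}
    {P : Matrix (Fin (T + 1) × Fin b) (Fin (T + 1) × Fin c) ℝ}
    (hM : BlockLT M) (hP : BlockLT P) : BlockLT (M * P) := by
  intro t s i j hts
  rw [mul_apply]
  refine Finset.sum_eq_zero fun ⟨u, k⟩ _ => ?_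
  rcases lt_or_ge t u with h | h
  · rw [hM t u i k h, zero_mul]
  · rw [hP u s k j (h.trans_lt hts), mul_zero]

theorem StrictBlockLT.mul_blockLT {M : Matrix (Fin (T + 1) × Fin a) (Fin (T + 1) × Fin b) ℝ}
    {P : Matrix (Fin (T + 1) × Fin b) (Fin (T + 1) × Fin c) ℝ}
    (hM : StrictBlockLT M) (hP : BlockLT P) : StrictBlockLT (M * P) := by
  intro t s i j hts
  rw [mul_apply]
  refine Finset.sum_eq_zero fun ⟨u, k⟩ _ => ?_
  rcases le_or_gt t u with h | h
  · rw [hM t u i k h, zero_mul]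
  · rw [hP u s k j (h.trans_le hts), mul_zero]

theorem StrictBlockLT.blockLT {M : Matrix (Fin (T + 1) × Fin a) (Fin (T + 1) × Fin b) ℝ}
    (hM : StrictBlockLT M) : BlockLT M :=
  fun t s i j h => hM t s i j h.le

theorem BlockLT.inv {M : Matrix (Fin (T + 1) × Fin a) (Fin (T + 1) × Fin a) ℝ}
    (hM : BlockLT M) : BlockLT M⁻¹ := by
  by_cases hdet : IsUnit M.det
  · have := M.invertibleOfIsUnitDet hdet
    exact blockLT_iff_blockTriangular.2
      (blockTriangular_inv_of_blockTriangular (blockLT_iff_blockTriangular.1 hM))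
  · rw [nonsing_inv_apply_not_isUnit M hdet]
    exact fun _ _ _ _ _ => rfl

theorem StrictBlockLT.pow_apply_eq_zero
    {M : Matrix (Fin (T + 1) × Fin a) (Fin (T + 1) × Fin a) ℝ} (hM : StrictBlockLT M) (k : ℕ)
    {t s : Fin (T + 1)} (i j : Fin a) (hts : (t : ℕ) < s + k) : (M ^ k) (t, i) (s, j) = 0 := by
  induction k generalizing t i with
  | zero =>
    exact one_apply_ne fun h => by have := congrArg (Fin.val ∘ Prod.fst) h; simp at this; omega
  | succ k ih =>
    rw [pow_succ', mul_apply]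
    refine Finset.sum_eq_zero fun ⟨u, l⟩ _ => ?_
    rcases le_or_gt t u with h | h
    · rw [hM t u i l h, zero_mul]
    · rw [ih l (by omega), mul_zero]

theorem StrictBlockLT.isNilpotent {M : Matrix (Fin (T + 1) × Fin a) (Fin (T + 1) × Fin a) ℝ}
    (hM : StrictBlockLT M) : IsNilpotent M :=
  ⟨T + 1, by ext ⟨t, i⟩ ⟨s, j⟩; exact hM.pow_apply_eq_zero _ i j (by omega)⟩

end BlockLowerTriangular

theorem strictBlockLT_shiftZ (n T : ℕ) : StrictBlockLT (shiftZ n T) := by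
  intro t s i j hts
  simp only [shiftZ, ite_eq_right_iff, and_imp]
  intro h _
  exact absurd hts (by rw [Fin.le_def]; omega)

theorem blockLT_hatA {n : ℕ} (T : ℕ) (A : Matrix (Fin n) (Fin n) ℝ) : BlockLT (hatA T A) :=
  fun _ _ _ _ hts => if_neg hts.ne

theorem blockLT_hatB {n p : ℕ} (T : ℕ) (B : Matrix (Fin n) (Fin p) ℝ) : BlockLT (hatB T B) :=
  fun _ _ _ _ hts => if_neg fun h => hts.ne h.1

/-- Theorem 1, part 1 (achievability). For block lower triangular `K`, the system responses
`Φ_x := (I − Z(Â + B̂K))⁻¹` and `Φ_u := K Φ_x` are block lower triangular and satisfy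
the affine constraint `(I − ZÂ) Φ_x − Z B̂ Φ_u = I`. -/
theorem sls_achievability {n p T : ℕ}
    (A : Matrix (Fin n) (Fin n) ℝ) (B : Matrix (Fin n) (Fin p) ℝ)
    (K : Matrix (Fin (T + 1) × Fin p) (Fin (T + 1) × Fin n) ℝ) (hK : BlockLT K) :
    BlockLT (1 - shiftZ n T * (hatA T A + hatB T B * K))⁻¹ ∧
    BlockLT (K * (1 - shiftZ n T * (hatA T A + hatB T B * K))⁻¹) ∧
    (1 - shiftZ n T * hatA T A) * (1 - shiftZ n T * (hatA T A + hatB T B * K))⁻¹ -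
      shiftZ n T * hatB T B * (K * (1 - shiftZ n T * (hatA T A + hatB T B * K))⁻¹) = 1 := by
  set N := shiftZ n T * (hatA T A + hatB T B * K) with hN_def
  have hN : StrictBlockLT N := (strictBlockLT_shiftZ n T).mul_blockLT <|
    blockLT_iff_blockTriangular.2 <| (blockLT_iff_blockTriangular.1 (blockLT_hatA T A)).add
      (blockLT_iff_blockTriangular.1 ((blockLT_hatB T B).mul hK))
  have hΦ : BlockLT (1 - N)⁻¹ := BlockLT.inv <| blockLT_iff_blockTriangular.2 <|
    blockTriangular_one.sub (blockLT_iff_blockTriangular.1 hN.blockLT)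
  have hdet : IsUnit (1 - N).det := (isUnit_iff_isUnit_det _).1 hN.isNilpotent.isUnit_one_sub
  refine ⟨hΦ, hK.mul hΦ, ?_⟩
  calc (1 - shiftZ n T * hatA T A) * (1 - N)⁻¹ - shiftZ n T * hatB T B * (K * (1 - N)⁻¹)
      = (1 - N) * (1 - N)⁻¹ := by
        simp only [hN_def, Matrix.sub_mul, Matrix.mul_add, Matrix.add_mul, Matrix.mul_assoc]; abel
    _ = 1 := mul_nonsing_inv _ hdet
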